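/- Let g be the 8-dimensional nilpotent Lie algebra with structure (0,0,12,13,14,15,16,36−45−27), i.e. de₁=de₂=0, de₃=e₁∧e₂, de₄=e₁∧e₃, de₅=e₁∧e₄, de₆=e₁∧e₅, de₇=e₁∧e₆, de₈=e₃∧e₆−e₄∧e₅−e₂∧e₇. Then the space of closed 2-forms modulo exact 2-forms, H²(g,ℝ), is 3-dimensional, spanned by the classes of e₂∧e₃, e₃∧e₄−e₂∧e₅, and e₁∧e₇. -/

import Mathlib

/- STATEMENT 12: for the 8-dimensional nilpotent Lie algebra
`(0,0,12,13,14,15,16,36−45−27)`, the second Lie algebra cohomology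
`H²(g,ℝ) = ker(d|Λ²)/im(d|Λ¹)` is 3-dimensional, spanned by the classes of
`e₂∧e₃`, `e₃∧e₄−e₂∧e₅` and `e₁∧e₇`.  Forms are modelled in `Λ•g*` with
`g* = Fin 8 → ℝ`. -/

noncomputable section

open ExteriorAlgebra

/-- The basis 1-forms `e₁,…,e₈` (0-indexed). -/
def e (i : Fin 8) : ExteriorAlgebra ℝ (Fin 8 → ℝ) := ι ℝ (Pi.single i 1)

/-- The values of `d` on the basis: `(0,0,12,13,14,15,16,36−45−27)` (0-indexed). -/
def D : Fin 8 → ExteriorAlgebra ℝ (Fin 8 → ℝ) :=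
  ![0, 0, e 0 * e 1, e 0 * e 2, e 0 * e 3, e 0 * e 4, e 0 * e 5,
    e 2 * e 5 - e 3 * e 4 - e 1 * e 6]

/-- `d` on 1-forms, extended linearly from the basis. -/
def dOne : (Fin 8 → ℝ) →ₗ[ℝ] ExteriorAlgebra ℝ (Fin 8 → ℝ) :=
  (Pi.basisFun ℝ (Fin 8)).constr ℝ D

/-- The 2-form `∑ k_{ij} e_i ∧ e_j` with coefficients `k`. -/
def twoForm (k : Fin 8 → Fin 8 → ℝ) : ExteriorAlgebra ℝ (Fin 8 → ℝ) :=
  ∑ i, ∑ j, k i j • (e i * e j)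

/-- `d` of the 2-form with coefficients `k`. -/
def dTwo (k : Fin 8 → Fin 8 → ℝ) : ExteriorAlgebra ℝ (Fin 8 → ℝ) :=
  ∑ i, ∑ j, k i j • (D i * e j - e i * D j)

/-- Coefficients of the generator `e₂∧e₃` (0-indexed `e₁∧e₂`). -/
def k1 : Fin 8 → Fin 8 → ℝ := fun i j => if i = 1 ∧ j = 2 then 1 else 0

/-- Coefficients of the generator `e₃∧e₄ − e₂∧e₅`. -/
def k2 : Fin 8 → Fin 8 → ℝ := fun i j =>
  if i = 2 ∧ j = 3 then 1 else if i = 1 ∧ j = 4 then -1 else 0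

/-- Coefficients of the generator `e₁∧e₇`. -/
def k3 : Fin 8 → Fin 8 → ℝ := fun i j => if i = 0 ∧ j = 6 then 1 else 0

/-!
The coefficient of `e_a ∧ e_b (∧ e_c)` in a form is read off by the functional `minor ![a, b (, c)]`
on the exterior algebra. Each `de_i` is itself a 2-form, and a 2-form only depends on the
antisymmetric part of its coefficient matrix, so every question becomes linear algebra on
coefficients. Closedness of `twoForm k` yields 19 linear relations among the `k i j - k j i`; they
allow choosing `ξ` so that `twoForm k - dOne ξ` only has components along `e₂∧e₃`,
`e₃∧e₄ − e₂∧e₅` and `e₁∧e₇`. Conversely, no exact form has a component along `e₂∧e₃`, `e₃∧e₄`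
or `e₁∧e₇` (`minor ![1, 2]`, `minor ![2, 3]`, `minor ![0, 6]` with 0-based indices), which makes
the three classes independent.
-/

namespace ExteriorAlgebra

variable {R ι : Type*} [CommRing R]

def minor {m : ℕ} (s : Fin m → ι) : ExteriorAlgebra R (ι → R) →ₗ[R] R :=
  liftAlternating (Pi.single m (Matrix.detRowAlternating.compLinearMap (LinearMap.funLeft R R s)))

theorem minor_ιMulti {m : ℕ} (s : Fin m → ι) (v : Fin m → ι → R) :
    minor s (ιMulti R m v) = (Matrix.of fun i j => v i (s j)).det := by
  rw [minor, liftAlternating_apply_ιMulti, Pi.single_eq_same]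
  rfl

end ExteriorAlgebra

theorem Finset.sum_sum_smul_eq_zero_of_symm_of_antisymm {ι K M : Type*} [Fintype ι] [Semiring K]
    [AddCommGroup M] [Module K M] [IsAddTorsionFree M] {m : ι → ι → K} {b : ι → ι → M}
    (hm : ∀ i j, m i j = m j i) (hb : ∀ i j, b i j = -b j i) :
    ∑ i, ∑ j, m i j • b i j = 0 := by
  rw [← self_eq_neg]
  calc ∑ i, ∑ j, m i j • b i j = ∑ i, ∑ j, m j i • b j i := Finset.sum_comm
    _ = ∑ i, ∑ j, -(m i j • b i j) :=
      Finset.sum_congr rfl fun i _ => Finset.sum_congr rfl fun j _ => by rw [hm, hb, smul_neg]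
    _ = -∑ i, ∑ j, m i j • b i j := by simp only [Finset.sum_neg_distrib]

theorem e_mul_self (i : Fin 8) : e i * e i = 0 := ι_sq_zero _

theorem mul_e_mul_self (x : ExteriorAlgebra ℝ (Fin 8 → ℝ)) (i : Fin 8) : x * e i * e i = 0 := by
  rw [mul_assoc, e_mul_self, mul_zero]

theorem e_mul_e_anticomm (i j : Fin 8) : e i * e j = -(e j * e i) :=
  eq_neg_of_add_eq_zero_left (ι_add_mul_swap _ _)

theorem e_mul_e_eq_ιMulti (p q : Fin 8) :
    e p * e q = ιMulti ℝ 2 fun i => Pi.single (![p, q] i) 1 := by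
  simp [ιMulti_apply, e, Matrix.vecTail]

theorem e_mul_e_mul_e_eq_ιMulti (p q r : Fin 8) :
    e p * (e q * e r) = ιMulti ℝ 3 fun i => Pi.single (![p, q, r] i) 1 := by
  simp [ιMulti_apply, e, Matrix.vecTail]

theorem minor_e_mul_e (a b p q : Fin 8) :
    minor ![a, b] (e p * e q) =
      (if a = p ∧ b = q then 1 else 0) - (if b = p ∧ a = q then 1 else 0) := by
  rw [e_mul_e_eq_ιMulti, minor_ιMulti, Matrix.det_fin_two]
  -- Entries are reduced before `Pi.single_apply`, otherwise the resulting `if`s carry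
  -- `Decidable` instances on the unreduced entries and `ite_zero_mul_ite_zero` does not match.
  simp only [Matrix.of_apply, Matrix.cons_val_zero, Matrix.cons_val_one]
  simp only [Pi.single_apply, ite_zero_mul_ite_zero, mul_one]

theorem minor_e_mul_e_mul_e (a b c p q r : Fin 8) :
    minor ![a, b, c] (e p * (e q * e r)) =
      (if a = p ∧ b = q ∧ c = r then 1 else 0) - (if a = p ∧ c = q ∧ b = r then 1 else 0)
      - (if b = p ∧ a = q ∧ c = r then 1 else 0) + (if b = p ∧ c = q ∧ a = r then 1 else 0)
      + (if c = p ∧ a = q ∧ b = r then 1 else 0) - (if c = p ∧ b = q ∧ a = r then 1 else 0) := by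
  rw [e_mul_e_mul_e_eq_ιMulti, minor_ιMulti, Matrix.det_fin_three]
  simp only [Matrix.of_apply, Matrix.cons_val]
  simp only [Pi.single_apply, ite_zero_mul_ite_zero, mul_one, and_assoc]

def twoFormₗ : (Fin 8 → Fin 8 → ℝ) →ₗ[ℝ] ExteriorAlgebra ℝ (Fin 8 → ℝ) where
  toFun := twoForm
  map_add' k k' := by simp only [twoForm, Pi.add_apply, add_smul, Finset.sum_add_distrib]
  map_smul' c k := by
    simp only [twoForm, Pi.smul_apply, smul_eq_mul, mul_smul, Finset.smul_sum, RingHom.id_apply]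

section twoForm_linear

variable (k k' : Fin 8 → Fin 8 → ℝ)

theorem twoForm_zero : twoForm 0 = 0 := map_zero twoFormₗ
theorem twoForm_add : twoForm (k + k') = twoForm k + twoForm k' := map_add twoFormₗ k k'
theorem twoForm_sub : twoForm (k - k') = twoForm k - twoForm k' := map_sub twoFormₗ k k'
theorem twoForm_smul (c : ℝ) : twoForm (c • k) = c • twoForm k := map_smul twoFormₗ c k
theorem twoForm_sum {α : Type*} (s : Finset α) (f : α → Fin 8 → Fin 8 → ℝ) :
    twoForm (∑ a ∈ s, f a) = ∑ a ∈ s, twoForm (f a) := map_sum twoFormₗ f s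

end twoForm_linear

def wedgeCoeff (p q : Fin 8) : Fin 8 → Fin 8 → ℝ := fun i j => if i = p ∧ j = q then 1 else 0

theorem twoForm_wedgeCoeff (p q : Fin 8) : twoForm (wedgeCoeff p q) = e p * e q := by
  simp [twoForm, wedgeCoeff, ite_and]

theorem minor_twoForm (a b : Fin 8) (k : Fin 8 → Fin 8 → ℝ) :
    minor ![a, b] (twoForm k) = k a b - k b a := by
  simp [twoForm, minor_e_mul_e, mul_sub, Finset.sum_sub_distrib, ite_and]

theorem twoForm_eq_of_antisymm_eq {k k' : Fin 8 → Fin 8 → ℝ}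
    (h : ∀ i j, k i j - k j i = k' i j - k' j i) : twoForm k = twoForm k' := by
  have : IsAddTorsionFree (ExteriorAlgebra ℝ (Fin 8 → ℝ)) := .of_isTorsionFree ℝ _
  rw [← sub_eq_zero, ← twoForm_sub]
  refine Finset.sum_sum_smul_eq_zero_of_symm_of_antisymm (fun i j => ?_) e_mul_e_anticomm
  simp only [Pi.sub_apply]
  linarith [h i j]

def dCoeff : Fin 8 → Fin 8 → Fin 8 → ℝ :=
  ![0, 0, wedgeCoeff 0 1, wedgeCoeff 0 2, wedgeCoeff 0 3, wedgeCoeff 0 4,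
    wedgeCoeff 0 5, wedgeCoeff 2 5 - wedgeCoeff 3 4 - wedgeCoeff 1 6]

theorem D_eq_twoForm (i : Fin 8) : D i = twoForm (dCoeff i) := by
  fin_cases i <;> simp [D, dCoeff, twoForm_zero, twoForm_sub, twoForm_wedgeCoeff]

theorem dOne_eq_twoForm (ξ : Fin 8 → ℝ) : dOne ξ = twoForm (∑ i, ξ i • dCoeff i) := by
  simp [twoForm_sum, twoForm_smul, ← D_eq_twoForm, dOne, Module.Basis.constr_apply_fintype]

theorem dTwo_k1 : dTwo k1 = 0 := by
  simp [dTwo, k1, ite_and, D, ← mul_assoc, e_mul_e_anticomm 1 0, mul_e_mul_self]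

theorem dTwo_k2 : dTwo k2 = 0 := by
  simp [dTwo, k2, ite_and, D, Fin.sum_univ_eight, ← mul_assoc, e_mul_e_anticomm 1 0,
    e_mul_e_anticomm 2 0, mul_e_mul_self]

theorem dTwo_k3 : dTwo k3 = 0 := by
  simp [dTwo, k3, ite_and, D, ← mul_assoc, e_mul_self]

set_option maxHeartbeats 1000000 in
theorem exists_eq_add_dOne_of_dTwo_eq_zero (k : Fin 8 → Fin 8 → ℝ) (hk : dTwo k = 0) :
    ∃ (a b c : ℝ) (ξ : Fin 8 → ℝ),
      twoForm k = a • twoForm k1 + b • twoForm k2 + c • twoForm k3 + dOne ξ := by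
  -- `d : Λ² → Λ³` has rank 28 − 9 = 19; the coefficients of `dTwo k` at these triples are
  -- independent.
  have rel : ∀ s ∈ ([![0, 1, 2], ![0, 1, 3], ![0, 1, 4], ![0, 1, 5], ![0, 1, 6], ![0, 1, 7],
      ![0, 2, 3], ![0, 2, 4], ![0, 2, 5], ![0, 2, 6], ![0, 2, 7], ![0, 3, 4], ![0, 3, 5],
      ![0, 3, 6], ![0, 3, 7], ![0, 4, 6], ![0, 4, 7], ![0, 5, 7], ![1, 2, 5]] :
        List (Fin 3 → Fin 8)),
      minor s (dTwo k) = 0 := fun s _ => by rw [hk, map_zero]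
  simp only [List.forall_mem_cons, List.not_mem_nil, IsEmpty.forall_iff, forall_const, and_true,
    dTwo, Fin.sum_univ_eight, D, Matrix.cons_val] at rel
  simp only [map_add, map_sub, map_neg, map_smul, map_zero, sub_mul, mul_sub, zero_mul, mul_zero,
    mul_assoc, minor_e_mul_e_mul_e, Fin.reduceEq, and_false, and_true, ↓reduceIte,
    sub_zero, add_zero, zero_add, smul_eq_mul, mul_one, zero_sub, sub_self, neg_zero, neg_neg,
    mul_neg] at rel
  obtain ⟨h012, h013, h014, h015, h016, h017, h023, h024, h025, h026, h027, h034, h035, h036, h037,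
    h046, h047, h057, h125⟩ := rel
  -- `ξ i` matches the coefficient of `e 0 * e (i - 1)` via `D i` for `2 ≤ i ≤ 6`, and `ξ 7` that
  -- of `e 1 * e 6` via `D 7`.
  refine ⟨k 1 2 - k 2 1, k 2 3 - k 3 2, k 0 6 - k 6 0,
    ![0, 0, k 0 1 - k 1 0, k 0 2 - k 2 0, k 0 3 - k 3 0, k 0 4 - k 4 0, k 0 5 - k 5 0,
      k 6 1 - k 1 6], ?_⟩
  rw [dOne_eq_twoForm, ← twoForm_smul, ← twoForm_smul, ← twoForm_smul, ← twoForm_add,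
    ← twoForm_add, ← twoForm_add]
  refine twoForm_eq_of_antisymm_eq fun i j => ?_
  fin_cases i <;> fin_cases j <;> simp [k1, k2, k3, wedgeCoeff, dCoeff, Fin.sum_univ_eight] <;>
    linarith

theorem minor_dOne_eq_zero (ξ : Fin 8 → ℝ) :
    minor ![1, 2] (dOne ξ) = 0 ∧ minor ![2, 3] (dOne ξ) = 0 ∧ minor ![0, 6] (dOne ξ) = 0 := by
  simp [dOne_eq_twoForm, minor_twoForm, dCoeff, wedgeCoeff, Fin.sum_univ_eight]

theorem eq_zero_of_add_eq_dOne (a b c : ℝ) (ξ : Fin 8 → ℝ)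
    (h : a • twoForm k1 + b • twoForm k2 + c • twoForm k3 = dOne ξ) : a = 0 ∧ b = 0 ∧ c = 0 := by
  obtain ⟨h12, h23, h06⟩ := minor_dOne_eq_zero ξ
  rw [← h] at h12 h23 h06
  simpa [minor_twoForm, k1, k2, k3] using And.intro h12 (And.intro h23 h06)

/-- the three generators are closed; every closed 2-form is a linear
combination of them plus an exact form; and no nontrivial linear combination of
them is exact.  Hence `H²(g,ℝ)` is 3-dimensional with the stated basis. -/
theorem H2_of_eight_dim_example :
    (dTwo k1 = 0 ∧ dTwo k2 = 0 ∧ dTwo k3 = 0)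
    ∧ (∀ k : Fin 8 → Fin 8 → ℝ, dTwo k = 0 →
        ∃ (a b c : ℝ) (ξ : Fin 8 → ℝ),
          twoForm k = a • twoForm k1 + b • twoForm k2 + c • twoForm k3 + dOne ξ)
    ∧ (∀ (a b c : ℝ) (ξ : Fin 8 → ℝ),
        a • twoForm k1 + b • twoForm k2 + c • twoForm k3 = dOne ξ →
          a = 0 ∧ b = 0 ∧ c = 0) :=
  ⟨⟨dTwo_k1, dTwo_k2, dTwo_k3⟩, exists_eq_add_dOne_of_dTwo_eq_zero, eq_zero_of_add_eq_dOne⟩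

end
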